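/- arXiv:1804.11273 — 2 statements merged into one kernel-verified Lean document; each statement's English description precedes it below -/
import Mathlib

section
/- Let γ ∈ ℂ and let w(x) = −1 + γ/x + u(x) where u is twice differentiable on a domain avoiding 0 and w(x) ∉ {0, 1}. If w satisfies the fifth Painlevé equation P_V(α, β, γ, 2), then u satisfies an equation of the form u'' = (1 − 1/x)·u + f(1/x, u, u'), where f(s,a,b) is analytic near (0,0,0) with f = O(s²) + O(a²) + O(b²) + O(ab). -/
/-!
Put `s = 1/x`, so that `w = -1 + γ s + u` and `w' = -γ s² + u'`. Substituting into `P_V(α,β,γ,2)`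
and moving `(γ/x)'' = 2γ s³` to the right expresses `u''` as a rational function of `(s, u, u')`
whose only denominators, `w` and `w - 1`, equal `-1` and `-2` at the origin; the nonlinearity `f` is
this function minus `(1 - s) u`, hence analytic at the origin with `f(0,0,0) = 0`. Its first-order terms
vanish because `δ = 2`: on the `u`-axis the term `2w(w+1)/(w-1) = u + u²/(u-2)` supplies exactly
the linear part `u`, and on the `s`-axis it cancels `γ w s` to first order.
-/

open Filter Set Topology

/-- The fifth Painlevé equation `P_V(α,β,γ,δ)` holding for `w` at `x`. -/
def PV (α β γ δ : ℂ) (w : ℂ → ℂ) (x : ℂ) : Prop :=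
  deriv (deriv w) x =
    (1 / (2 * w x) + 1 / (w x - 1)) * (deriv w x) ^ 2 - deriv w x / x
      + ((w x - 1) ^ 2 / x ^ 2) * (α * w x + β / w x)
      + γ * w x / x + δ * w x * (w x + 1) / (w x - 1)

section Calculus

variable {𝕜 : Type*} [NontriviallyNormedField 𝕜]

theorem hasDerivAt_const_div_pow (c : 𝕜) (n : ℕ) {x : 𝕜} (hx : x ≠ 0) :
    HasDerivAt (fun z => c / z ^ n) (-(n * c) / x ^ (n + 1)) x := by
  have h := ((hasDerivAt_pow n x).fun_inv (pow_ne_zero n hx)).const_mul c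
  simp only [← div_eq_mul_inv] at h
  refine h.congr_deriv ?_
  rcases n with _ | n
  · simp
  · rw [Nat.add_sub_cancel]
    field_simp
    ring

theorem eqOn_deriv_of_eqOn_const_div_pow_add {U : Set 𝕜} (hU : IsOpen U)
    (h0 : ∀ x ∈ U, x ≠ 0) {w v : 𝕜 → 𝕜} (hv : DifferentiableOn 𝕜 v U) (c : 𝕜) (n : ℕ)
    (hw : EqOn w (fun x => c / x ^ n + v x) U) :
    EqOn (deriv w) (fun x => -(n * c) / x ^ (n + 1) + deriv v x) U := fun x hx =>
  (hw.deriv hU hx).trans <|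
    ((hasDerivAt_const_div_pow c n (h0 x hx)).add
      ((hv x hx).differentiableAt (hU.mem_nhds hx)).hasDerivAt).deriv

theorem deriv_eq_zero_of_eventuallyEq_sq_mul {f g : 𝕜 → 𝕜} (hg : DifferentiableAt 𝕜 g 0)
    (hf : f =ᶠ[𝓝 0] fun s => s ^ 2 * g s) : deriv f 0 = 0 := by
  rw [hf.deriv_eq]
  exact ((hasDerivAt_pow 2 0).mul hg.hasDerivAt).deriv.trans (by simp)

end Calculus

namespace PainleveV

/-- The right-hand side of `P_V(α,β,γ,2)` at `w = -1 + γ s + a`, `w' = -γ s² + b`, `x = 1/s`,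
minus `(γ/x)'' = 2γ s³` and minus the linear part `(1 - s) a`. -/
noncomputable def nonlinearity (α β γ s a b : ℂ) : ℂ :=
  (1 / (2 * (-1 + γ * s + a)) + 1 / (-2 + γ * s + a)) * (-γ * s ^ 2 + b) ^ 2
    - (-γ * s ^ 2 + b) * s
    + (-2 + γ * s + a) ^ 2 * s ^ 2 * (α * (-1 + γ * s + a) + β / (-1 + γ * s + a))
    + γ * (-1 + γ * s + a) * s
    + 2 * (-1 + γ * s + a) * (γ * s + a) / (-2 + γ * s + a)
    - 2 * γ * s ^ 3 - (1 - s) * a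

variable (α β γ : ℂ)

attribute [local fun_prop] analyticAt_fst analyticAt_snd in
theorem analyticAt_nonlinearity :
    AnalyticAt ℂ (fun p : ℂ × ℂ × ℂ => nonlinearity α β γ p.1 p.2.1 p.2.2) (0, 0, 0) := by
  unfold nonlinearity
  fun_prop (disch := norm_num)

theorem nonlinearity_zero : nonlinearity α β γ 0 0 0 = 0 := by
  norm_num [nonlinearity]

theorem deriv_nonlinearity_fst : deriv (fun s => nonlinearity α β γ s 0 0) 0 = 0 := by
  have hne : ∀ᶠ s in 𝓝 (0 : ℂ), -2 + γ * s ≠ 0 :=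
    (by fun_prop : Continuous fun s : ℂ => -2 + γ * s).continuousAt.eventually_ne (by simp)
  refine deriv_eq_zero_of_eventuallyEq_sq_mul (g := fun s =>
    (1 / (2 * (-1 + γ * s)) + 1 / (-2 + γ * s)) * γ ^ 2 * s ^ 2 - γ * s
      + (-2 + γ * s) ^ 2 * (α * (-1 + γ * s) + β / (-1 + γ * s))
      + γ ^ 2 * (-1 + γ * s) / (-2 + γ * s)) (by fun_prop (disch := norm_num)) ?_
  filter_upwards [hne] with s hs
  simp only [nonlinearity, add_zero, mul_zero, sub_zero]
  field_simp
  ring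

theorem deriv_nonlinearity_snd : deriv (fun a => nonlinearity α β γ 0 a 0) 0 = 0 := by
  have hne : ∀ᶠ a in 𝓝 (0 : ℂ), -2 + a ≠ 0 :=
    (by fun_prop : Continuous fun a : ℂ => -2 + a).continuousAt.eventually_ne (by simp)
  refine deriv_eq_zero_of_eventuallyEq_sq_mul (g := fun a => 1 / (-2 + a))
    (by fun_prop (disch := norm_num)) ?_
  filter_upwards [hne] with a ha
  simp only [nonlinearity, mul_zero, zero_add, add_zero, sub_zero]
  field_simp
  ring

theorem nonlinearity_zero_zero (b : ℂ) : nonlinearity α β γ 0 0 b = -b ^ 2 := by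
  norm_num [nonlinearity]

theorem deriv_nonlinearity_thd : deriv (fun b => nonlinearity α β γ 0 0 b) 0 = 0 := by
  simp [nonlinearity_zero_zero]

end PainleveV

theorem stmt16_general (α β γ : ℂ) (U : Set ℂ) (hU : IsOpen U)
    (u w : ℂ → ℂ) (hw : ∀ x ∈ U, w x = -1 + γ / x + u x)
    (hu : AnalyticOn ℂ u U)
    (h0 : ∀ x ∈ U, x ≠ 0)
    (heq : ∀ x ∈ U, PV α β γ 2 w x) :
    ∃ f : ℂ → ℂ → ℂ → ℂ,
      AnalyticAt ℂ (fun p : ℂ × ℂ × ℂ => f p.1 p.2.1 p.2.2) (0, 0, 0) ∧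
      f 0 0 0 = 0 ∧
      deriv (fun s => f s 0 0) 0 = 0 ∧
      deriv (fun a => f 0 a 0) 0 = 0 ∧
      deriv (fun b => f 0 0 b) 0 = 0 ∧
      ∀ x ∈ U, deriv (deriv u) x = (1 - 1 / x) * u x + f (1 / x) (u x) (deriv u x) := by
  have hu' : AnalyticOnNhd ℂ u U := hU.analyticOn_iff_analyticOnNhd.mp hu
  have hw' : EqOn (deriv w) (fun x => -γ / x ^ 2 + deriv u x) U := by
    have h := eqOn_deriv_of_eqOn_const_div_pow_add (w := w) hU h0
      (hu'.differentiableOn.const_add (-1)) γ 1 fun x hx => by rw [hw x hx]; ring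
    intro x hx
    simpa [deriv_const_add, neg_div] using h hx
  have hw'' : EqOn (deriv (deriv w)) (fun x => 2 * γ / x ^ 3 + deriv (deriv u) x) U := by
    have h := eqOn_deriv_of_eqOn_const_div_pow_add hU h0 hu'.deriv.differentiableOn (-γ) 2 hw'
    intro x hx
    simpa using h hx
  refine ⟨PainleveV.nonlinearity α β γ, PainleveV.analyticAt_nonlinearity α β γ,
    PainleveV.nonlinearity_zero α β γ, PainleveV.deriv_nonlinearity_fst α β γ,
    PainleveV.deriv_nonlinearity_snd α β γ, PainleveV.deriv_nonlinearity_thd α β γ,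
    fun x hx => ?_⟩
  have h := heq x hx
  rw [PV, hw'' hx, hw' hx, hw x hx] at h
  rw [PainleveV.nonlinearity]
  linear_combination h

/-- Normalization of P_V in the family III₀: if `w = −1 + γ/x + u` satisfies
`P_V(α,β,γ,2)` on an open set `U` avoiding `0` (with `w ∉ {0,1}`), then `u` satisfies
`u'' = (1 − 1/x)u + f(1/x, u, u')` with `f` analytic near `(0,0,0)`, `f(0,0,0) = 0`, and
all first partial derivatives of `f` vanishing at the origin
(so `f = O(s²) + O(a²) + O(b²) + O(ab)`). -/
theorem stmt16 (α β γ : ℂ) (U : Set ℂ) (hU : IsOpen U)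
    (u w : ℂ → ℂ) (hw : ∀ x ∈ U, w x = -1 + γ / x + u x)
    (hu : AnalyticOn ℂ u U)
    (h0 : ∀ x ∈ U, x ≠ 0) (hwz : ∀ x ∈ U, w x ≠ 0) (hw1 : ∀ x ∈ U, w x ≠ 1)
    (heq : ∀ x ∈ U, PV α β γ 2 w x) :
    ∃ f : ℂ → ℂ → ℂ → ℂ,
      AnalyticAt ℂ (fun p : ℂ × ℂ × ℂ => f p.1 p.2.1 p.2.2) (0, 0, 0) ∧
      f 0 0 0 = 0 ∧
      deriv (fun s => f s 0 0) 0 = 0 ∧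
      deriv (fun a => f 0 a 0) 0 = 0 ∧
      deriv (fun b => f 0 0 b) 0 = 0 ∧
      ∀ x ∈ U, deriv (deriv u) x = (1 - 1 / x) * u x + f (1 / x) (u x) (deriv u x) :=
  stmt16_general α β γ U hU u w hw hu h0 heq
end

section
/- There is a unique formal power series û(s) = Σ_{n≥2} u_n s^n (in the variable s = 1/x) such that u(x) = û(1/x) formally satisfies u'' = (1 + 2q/x)·u + f(1/x, u, u'), for any fixed q ∈ ℂ and any f analytic near (0,0,0) with f(s,a,b) = O(s²) + O(a²) + O(b²) + O(ab); moreover each coefficient u_n is determined recursively: u_n equals a polynomial in u_2, …, u_{n−1}, the Taylor coefficients of f, and q. -/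
/-!
The `+u` on the right-hand side lets the equation be written as `u = Φ u` with
`Φ u = X⁴u'' + 2X³u' - 2qXu - f(X, u, -X²u')`, and `Φ` is an `X`-adic contraction on series
without constant term: `u ≡ w mod Xⁿ` implies `Φ u ≡ Φ w mod Xⁿ⁺¹`. Indeed the Euler operator
`X d/dX` preserves divisibility by `Xⁿ`, so the derivative terms gain a factor `X²`; and since `f`
has no term `a` or `b`, every monomial `sⁱaʲbᵏ` of `f` with `(j, k) ≠ 0` has `i + j + k ≥ 2` and
gains at least one factor `X` once `u, -X²u'` (both divisible by `X`) are substituted. So the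
`n`-th coefficient of a solution is forced by the lower ones: a solution is built by recursion on
`n` and is unique by induction. As `f` vanishes to order two, `Φ u` is divisible by `X²`, hence so
is the solution.
-/

open PowerSeries

/-- Formal substitution of a formal power series `F` in three variables `(s, a, b)` (given by
its coefficient family `F i j k` of `sⁱaʲbᵏ`) with `s := X`, `a := U`, `b := V`, where `U`
and `V` are formal power series of order `≥ 2`, so that only finitely many monomials
contribute to each coefficient. -/
noncomputable def formalSubst (F : ℕ → ℕ → ℕ → ℂ) (U V : PowerSeries ℂ) : PowerSeries ℂ :=
  PowerSeries.mk fun n =>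
    ∑ i ∈ Finset.range (n + 1), ∑ j ∈ Finset.range (n + 1), ∑ k ∈ Finset.range (n + 1),
      F i j k * PowerSeries.coeff n (PowerSeries.X ^ i * U ^ j * V ^ k)

section Divisibility

variable {A : Type*} [CommRing A] {π : A}

theorem pow_dvd_mul_sub_mul {x y z t : A} {n e f : ℕ} (hy : π ^ (e + 1) ∣ y)
    (hz : π ^ (f + 1) ∣ z) (hxy : π ^ (n + e) ∣ x - y) (hzt : π ^ (n + f) ∣ z - t) :
    π ^ (n + e + f + 1) ∣ x * z - y * t := by
  rw [show x * z - y * t = (x - y) * z + y * (z - t) by ring]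
  refine dvd_add ?_ ?_
  · rw [show n + e + f + 1 = (n + e) + (f + 1) by omega, pow_add]
    exact mul_dvd_mul hxy hz
  · rw [show n + e + f + 1 = (e + 1) + (n + f) by omega, pow_add]
    exact mul_dvd_mul hy hzt

theorem pow_dvd_pow_succ_sub_pow_succ {a b : A} {n : ℕ} (ha : π ∣ a) (hb : π ∣ b)
    (hab : π ^ n ∣ a - b) (j : ℕ) : π ^ (n + j) ∣ a ^ (j + 1) - b ^ (j + 1) := by
  induction j with
  | zero => simpa using hab
  | succ j ih =>
    rw [pow_succ a, pow_succ b]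
    exact pow_dvd_mul_sub_mul (f := 0) (pow_dvd_pow_of_dvd hb _) (by rwa [pow_one]) ih hab

theorem pow_dvd_pow_mul_pow_sub_pow_mul_pow {a b c d : A} {n : ℕ} (ha : π ∣ a) (hb : π ∣ b)
    (hc : π ∣ c) (hd : π ∣ d) (hab : π ^ n ∣ a - b) (hcd : π ^ n ∣ c - d) (j k : ℕ) :
    π ^ (n + j + k - 1) ∣ a ^ j * c ^ k - b ^ j * d ^ k := by
  rcases j with _ | j <;> rcases k with _ | k
  · simp
  · simpa [add_comm] using pow_dvd_pow_succ_sub_pow_succ hc hd hcd k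
  · simpa using pow_dvd_pow_succ_sub_pow_succ ha hb hab j
  · rw [show n + (j + 1) + (k + 1) - 1 = n + j + k + 1 by omega]
    exact pow_dvd_mul_sub_mul (pow_dvd_pow_of_dvd hb _) (pow_dvd_pow_of_dvd hc _)
      (pow_dvd_pow_succ_sub_pow_succ ha hb hab j) (pow_dvd_pow_succ_sub_pow_succ hc hd hcd k)

end Divisibility

namespace PowerSeries

variable {R : Type*} [CommRing R]

theorem coeff_eq_zero_of_X_pow_succ_dvd {n : ℕ} {f : R⟦X⟧} (h : X ^ (n + 1) ∣ f) :
    coeff n f = 0 :=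
  X_pow_dvd_iff.mp h n n.lt_succ_self

theorem eq_of_forall_X_pow_dvd_sub {f g : R⟦X⟧} (h : ∀ n, X ^ n ∣ f - g) : f = g := by
  ext n
  rw [← sub_eq_zero, ← map_sub]
  exact coeff_eq_zero_of_X_pow_succ_dvd (h (n + 1))

theorem X_pow_dvd_X_mul_derivative {n : ℕ} {f : R⟦X⟧} (h : X ^ n ∣ f) :
    X ^ n ∣ X * d⁄dX R f := by
  refine X_pow_dvd_iff.mpr fun m hm => ?_
  rcases m with _ | m
  · simp
  · rw [coeff_succ_X_mul, coeff_derivative, X_pow_dvd_iff.mp h (m + 1) hm, zero_mul]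

variable (Φ : R⟦X⟧ → R⟦X⟧)

def IsXAdicContraction : Prop :=
  ∀ n u w, X ∣ u → X ∣ w → X ^ n ∣ u - w → X ^ (n + 1) ∣ Φ u - Φ w

noncomputable def fixedPointCoeff : ℕ → R
  | n => coeff n (Φ (mk fun m => if m < n then fixedPointCoeff m else 0))

variable {Φ}

theorem IsXAdicContraction.exists_fixedPoint (hΦ : IsXAdicContraction Φ)
    (hΦ₀ : ∀ u, X ∣ u → X ∣ Φ u) :
    ∃ u : R⟦X⟧, X ∣ u ∧ Φ u = u := by
  let a := fixedPointCoeff Φ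
  let t (n : ℕ) : R⟦X⟧ := mk fun m => if m < n then a m else 0
  have ha : ∀ n, a n = coeff n (Φ (t n)) := fun n => by
    show fixedPointCoeff Φ n = _
    rw [fixedPointCoeff]
  have ha₀ : a 0 = 0 := by
    rw [ha, show t 0 = 0 by ext; simp [t]]
    exact coeff_eq_zero_of_X_pow_succ_dvd (by simpa using hΦ₀ 0 (dvd_zero X))
  have ht : ∀ n, X ∣ t n := fun n => by
    rw [X_dvd_iff, ← coeff_zero_eq_constantCoeff_apply]
    simp [t, ha₀]
  have hu : X ∣ mk a := by simpa [X_dvd_iff] using ha₀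
  have hut : ∀ n, X ^ n ∣ mk a - t n := fun n =>
    X_pow_dvd_iff.mpr fun m hm => by simp [t, hm]
  refine ⟨mk a, hu, ?_⟩
  ext n
  rw [coeff_mk, ha, ← sub_eq_zero, ← map_sub]
  exact coeff_eq_zero_of_X_pow_succ_dvd (hΦ n _ _ hu (ht n) (hut n))

theorem IsXAdicContraction.eq_of_fixedPoint (hΦ : IsXAdicContraction Φ) {u w : R⟦X⟧}
    (hu : X ∣ u) (hw : X ∣ w) (hΦu : Φ u = u) (hΦw : Φ w = w) : u = w := by
  refine eq_of_forall_X_pow_dvd_sub fun n => ?_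
  induction n with
  | zero => exact one_dvd _
  | succ n ih => simpa [hΦu, hΦw] using hΦ n u w hu hw ih

end PowerSeries

theorem X_pow_succ_dvd_formalSubst (F : ℕ → ℕ → ℕ → ℂ) {n : ℕ}
    (hF : ∀ i j k, i + j + k ≤ n → F i j k = 0) {U V : ℂ⟦X⟧} (hU : X ∣ U) (hV : X ∣ V) :
    X ^ (n + 1) ∣ formalSubst F U V := by
  refine X_pow_dvd_iff.mpr fun m hm => ?_
  rw [formalSubst, coeff_mk]
  refine Finset.sum_eq_zero fun i _ => Finset.sum_eq_zero fun j _ =>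
    Finset.sum_eq_zero fun k _ => ?_
  by_cases hijk : i + j + k ≤ n
  · rw [hF i j k hijk, zero_mul]
  · have hdvd : X ^ (i + j + k) ∣ X ^ i * U ^ j * V ^ k := by
      rw [pow_add, pow_add]
      exact mul_dvd_mul (mul_dvd_mul dvd_rfl (pow_dvd_pow_of_dvd hU j)) (pow_dvd_pow_of_dvd hV k)
    rw [coeff_eq_zero_of_X_pow_succ_dvd ((pow_dvd_pow X (by omega)).trans hdvd), mul_zero]

theorem X_pow_succ_dvd_formalSubst_sub (F : ℕ → ℕ → ℕ → ℂ) (h010 : F 0 1 0 = 0)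
    (h001 : F 0 0 1 = 0) {n : ℕ} {U U' V V' : ℂ⟦X⟧} (hU : X ∣ U) (hU' : X ∣ U') (hV : X ∣ V)
    (hV' : X ∣ V') (hUU' : X ^ n ∣ U - U') (hVV' : X ^ n ∣ V - V') :
    X ^ (n + 1) ∣ formalSubst F U V - formalSubst F U' V' := by
  refine X_pow_dvd_iff.mpr fun m hm => ?_
  have hUU'm := (pow_dvd_pow X (Nat.lt_succ_iff.mp hm)).trans hUU'
  have hVV'm := (pow_dvd_pow X (Nat.lt_succ_iff.mp hm)).trans hVV'
  rw [map_sub, sub_eq_zero, formalSubst, formalSubst, coeff_mk, coeff_mk]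
  refine Finset.sum_congr rfl fun i _ => Finset.sum_congr rfl fun j _ =>
    Finset.sum_congr rfl fun k _ => ?_
  by_cases hjk : j = 0 ∧ k = 0
  · obtain ⟨rfl, rfl⟩ := hjk
    rfl
  by_cases hijk : i + j + k ≤ 1
  · obtain ⟨rfl, rfl, rfl⟩ | ⟨rfl, rfl, rfl⟩ :
        (i = 0 ∧ j = 1 ∧ k = 0) ∨ (i = 0 ∧ j = 0 ∧ k = 1) := by omega
    · simp [h010]
    · simp [h001]
  congr 1
  rw [← sub_eq_zero, ← map_sub]
  refine coeff_eq_zero_of_X_pow_succ_dvd <|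
    (pow_dvd_pow X (by omega : m + 1 ≤ i + (m + j + k - 1))).trans ?_
  rw [pow_add, mul_assoc, mul_assoc, ← mul_sub]
  exact mul_dvd_mul_left _ (pow_dvd_pow_mul_pow_sub_pow_mul_pow hU hU' hV hV' hUU'm hVV'm j k)

theorem X_pow_add_two_dvd_X_pow_four_mul_derivative_derivative_add {R : Type*} [CommRing R]
    {n : ℕ} {f : R⟦X⟧} (h : X ^ n ∣ f) :
    X ^ (n + 2) ∣ X ^ 4 * d⁄dX R (d⁄dX R f) + 2 * X ^ 3 * d⁄dX R f := by
  have hθ := X_pow_dvd_X_mul_derivative h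
  have hθθ := X_pow_dvd_X_mul_derivative hθ
  have hEuler : X ^ 4 * d⁄dX R (d⁄dX R f) + 2 * X ^ 3 * d⁄dX R f
      = X ^ 2 * (X * d⁄dX R (X * d⁄dX R f) + X * d⁄dX R f) := by
    rw [Derivation.leibniz, derivative_X, smul_eq_mul, smul_eq_mul]
    ring
  rw [hEuler, add_comm n, pow_add]
  exact mul_dvd_mul_left _ (dvd_add hθθ hθ)

noncomputable def recursionMap (q : ℂ) (F : ℕ → ℕ → ℕ → ℂ) (u : ℂ⟦X⟧) : ℂ⟦X⟧ :=
  X ^ 4 * d⁄dX ℂ (d⁄dX ℂ u) + 2 * X ^ 3 * d⁄dX ℂ u - C (2 * q) * X * u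
    - formalSubst F u (-(X ^ 2 * d⁄dX ℂ u))

theorem recursionMap_eq_self_iff (q : ℂ) (F : ℕ → ℕ → ℕ → ℂ) (u : ℂ⟦X⟧) :
    recursionMap q F u = u ↔
      X ^ 4 * d⁄dX ℂ (d⁄dX ℂ u) + 2 * X ^ 3 * d⁄dX ℂ u
        = (1 + C (2 * q) * X) * u + formalSubst F u (-(X ^ 2 * d⁄dX ℂ u)) := by
  unfold recursionMap
  constructor <;> intro h <;> linear_combination h

theorem X_dvd_neg_X_pow_two_mul_derivative (u : ℂ⟦X⟧) : X ∣ -(X ^ 2 * d⁄dX ℂ u) :=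
  (dvd_neg).mpr ((dvd_pow_self X two_ne_zero).mul_right _)

theorem X_pow_two_dvd_recursionMap (q : ℂ) (F : ℕ → ℕ → ℕ → ℂ) (h000 : F 0 0 0 = 0)
    (h100 : F 1 0 0 = 0) (h010 : F 0 1 0 = 0) (h001 : F 0 0 1 = 0) {u : ℂ⟦X⟧} (hu : X ∣ u) :
    X ^ 2 ∣ recursionMap q F u := by
  have hF : ∀ i j k, i + j + k ≤ 1 → F i j k = 0 := by
    intro i j k h
    obtain ⟨rfl, rfl, rfl⟩ | ⟨rfl, rfl, rfl⟩ | ⟨rfl, rfl, rfl⟩ | ⟨rfl, rfl, rfl⟩ :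
        (i = 0 ∧ j = 0 ∧ k = 0) ∨ (i = 1 ∧ j = 0 ∧ k = 0) ∨ (i = 0 ∧ j = 1 ∧ k = 0) ∨
          (i = 0 ∧ j = 0 ∧ k = 1) := by omega
    exacts [h000, h100, h010, h001]
  have hdiff :=
    X_pow_add_two_dvd_X_pow_four_mul_derivative_derivative_add (n := 1) (f := u) (by rwa [pow_one])
  unfold recursionMap
  refine dvd_sub (dvd_sub ((pow_dvd_pow X (by norm_num)).trans hdiff) ?_)
    (X_pow_succ_dvd_formalSubst F hF hu (X_dvd_neg_X_pow_two_mul_derivative u))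
  rw [pow_two, mul_assoc]
  exact (mul_dvd_mul_left X hu).mul_left _

theorem isXAdicContraction_recursionMap (q : ℂ) (F : ℕ → ℕ → ℕ → ℂ) (h010 : F 0 1 0 = 0)
    (h001 : F 0 0 1 = 0) : IsXAdicContraction (recursionMap q F) := by
  intro n u w hu hw huw
  have hdiff := X_pow_add_two_dvd_X_pow_four_mul_derivative_derivative_add huw
  have hV : X ^ n ∣ -(X ^ 2 * d⁄dX ℂ u) - -(X ^ 2 * d⁄dX ℂ w) := by
    rw [show -(X ^ 2 * d⁄dX ℂ u) - -(X ^ 2 * d⁄dX ℂ w) = -(X * (X * d⁄dX ℂ (u - w))) by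
      rw [map_sub]; ring]
    exact (dvd_neg).mpr ((X_pow_dvd_X_mul_derivative huw).mul_left X)
  have hsubst := X_pow_succ_dvd_formalSubst_sub F h010 h001 hu hw
    (X_dvd_neg_X_pow_two_mul_derivative u) (X_dvd_neg_X_pow_two_mul_derivative w) huw hV
  have hlin : X ^ (n + 1) ∣ C (2 * q) * X * (u - w) := by
    rw [mul_assoc, pow_succ']
    exact (mul_dvd_mul_left X huw).mul_left _
  have hsplit : recursionMap q F u - recursionMap q F w
      = (X ^ 4 * d⁄dX ℂ (d⁄dX ℂ (u - w)) + 2 * X ^ 3 * d⁄dX ℂ (u - w))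
        - C (2 * q) * X * (u - w)
        - (formalSubst F u (-(X ^ 2 * d⁄dX ℂ u)) - formalSubst F w (-(X ^ 2 * d⁄dX ℂ w))) := by
    simp only [recursionMap, map_sub]
    ring
  rw [hsplit]
  exact dvd_sub (dvd_sub ((pow_dvd_pow X (by omega)).trans hdiff) hlin) hsubst

/-- Uniqueness of the formal power series solution of the normalized equation: for any
`q ∈ ℂ` and any formal `f(s,a,b)` with `f = O(s²)+O(a²)+O(b²)+O(ab)` (i.e., the constant
term and all three linear coefficients vanish), there is a unique formal power series
`û = Σ_{n≥2} u_n sⁿ` (`s = 1/x`) such that `u(x) = û(1/x)` formally satisfies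
`u'' = (1 + 2q/x)u + f(1/x, u, u')`; in the variable `s` this reads
`s⁴û'' + 2s³û' = (1 + 2qs)û + f(s, û, −s²û')`.  (Each `u_n` is thereby determined
recursively from `u_2, …, u_{n−1}`, the coefficients of `f`, and `q`.) -/
theorem stmt18 (q : ℂ) (F : ℕ → ℕ → ℕ → ℂ)
    (h000 : F 0 0 0 = 0) (h100 : F 1 0 0 = 0) (h010 : F 0 1 0 = 0) (h001 : F 0 0 1 = 0) :
    ∃! u : PowerSeries ℂ,
      PowerSeries.coeff 0 u = 0 ∧ PowerSeries.coeff 1 u = 0 ∧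
      PowerSeries.X ^ 4 * PowerSeries.derivative ℂ (PowerSeries.derivative ℂ u)
          + 2 * PowerSeries.X ^ 3 * PowerSeries.derivative ℂ u
        = (1 + PowerSeries.C (2 * q) * PowerSeries.X) * u
          + formalSubst F u (-(PowerSeries.X ^ 2 * PowerSeries.derivative ℂ u)) := by
  have hcontr := isXAdicContraction_recursionMap q F h010 h001
  have hsq : ∀ u, X ∣ u → X ^ 2 ∣ recursionMap q F u :=
    fun _ => X_pow_two_dvd_recursionMap q F h000 h100 h010 h001
  obtain ⟨u, hu, hfix⟩ :=
    hcontr.exists_fixedPoint fun u hu => (dvd_pow_self X two_ne_zero).trans (hsq u hu)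
  have hu₂ : X ^ 2 ∣ u := hfix ▸ hsq u hu
  refine ⟨u, ⟨X_pow_dvd_iff.mp hu₂ 0 (by norm_num), X_pow_dvd_iff.mp hu₂ 1 (by norm_num),
    (recursionMap_eq_self_iff q F u).mp hfix⟩, fun w ⟨hw₀, _, hw⟩ => ?_⟩
  have hXw : X ∣ w := X_dvd_iff.mpr (by rwa [← coeff_zero_eq_constantCoeff_apply])
  exact hcontr.eq_of_fixedPoint hXw hu ((recursionMap_eq_self_iff q F w).mpr hw) hfix
end
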